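/- arXiv:1709.00162 — 4 statements merged into one kernel-verified Lean document; each statement's English description precedes it below -/
import Mathlib

section
/- Coefficient improvement (positive case): Let a : Fin n → ℝ, b : ℝ, L_max = ∑_{j : a j > 0} a j, and suppose k satisfies a k > 0 and a k > L_max - b. Define δ = a k - (L_max - b). Then for every x : Fin n → {0,1}: ∑_j a j · x j ≤ b if and only if (∑_j a j · x j) - δ · x k ≤ b - δ. -/
theorem coefficient_improvement_pos (n : ℕ) (a : Fin n → ℝ) (b : ℝ) (k : Fin n)
    (Lmax : ℝ) (hL : Lmax = ∑ j ∈ Finset.univ.filter (fun j => a j > 0), a j)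
    (hk : a k > 0) (hgt : a k > Lmax - b)
    (δ : ℝ) (hδ : δ = a k - (Lmax - b)) :
    ∀ x : Fin n → ℝ, (∀ j, x j = 0 ∨ x j = 1) →
      ((∑ j, a j * x j ≤ b) ↔ (∑ j, a j * x j) - δ * x k ≤ b - δ) := by
  intro x hx
  have hδpos : 0 < δ := by rw [hδ]; linarith
  rcases hx k with h0 | h1
  · -- x k = 0: show sum ≤ Lmax - a k = b - δ, hence both sides true
    have key : ∑ j, a j * x j ≤ Lmax - a k := by
      have hkmem : k ∈ Finset.univ.filter (fun j => a j > 0) := by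
        simp [hk]
      have step1 : ∑ j, a j * x j ≤
          ∑ j ∈ Finset.univ.filter (fun j => a j > 0), a j * x j := by
        rw [← Finset.sum_filter_add_sum_filter_not Finset.univ (fun j => a j > 0)
          (fun j => a j * x j)]
        have : ∑ j ∈ Finset.univ.filter (fun j => ¬ a j > 0), a j * x j ≤ 0 := by
          apply Finset.sum_nonpos
          intro j hj
          simp only [Finset.mem_filter, not_lt] at hj
          rcases hx j with h | h <;> simp [h] <;> linarith [hj.2]
        linarith
      have step2 : ∑ j ∈ Finset.univ.filter (fun j => a j > 0), a j * x j ≤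
          ∑ j ∈ Finset.univ.filter (fun j => a j > 0), (if j = k then 0 else a j) := by
        apply Finset.sum_le_sum
        intro j hj
        simp only [Finset.mem_filter] at hj
        by_cases hjk : j = k
        · simp [hjk, h0]
        · simp only [hjk, if_false]
          rcases hx j with h | h <;> simp [h] <;> linarith [hj.2]
      have step3 : ∑ j ∈ Finset.univ.filter (fun j => a j > 0), (if j = k then 0 else a j)
          = Lmax - a k := by
        rw [hL, ← Finset.add_sum_erase _ _ hkmem, if_pos rfl, zero_add,
          Finset.sum_congr rfl fun j hj => if_neg (Finset.ne_of_mem_erase hj)]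
        exact Finset.sum_erase_eq_sub hkmem
      linarith
    have hbδ : b - δ = Lmax - a k := by rw [hδ]; ring
    constructor
    · intro _; simp [h0]; linarith
    · intro _; linarith
  · -- x k = 1
    simp only [h1, mul_one]
    constructor <;> intro <;> linarith
end

section
/- Coefficient improvement (negative case): Let a : Fin n → ℝ, b : ℝ, L_max = ∑_{j : a j > 0} a j, and suppose k satisfies a k < 0 and a k < b - L_max. Define a' equal to a except a' k = b - L_max. Then every x : Fin n → {0,1} satisfying ∑_j a j · x j ≤ b also satisfies ∑_j a' j · x j ≤ b, and conversely. -/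
theorem coefficient_improvement_neg (n : ℕ) (a : Fin n → ℝ) (b : ℝ) (k : Fin n)
    (Lmax : ℝ) (hL : Lmax = ∑ j ∈ Finset.univ.filter (fun j => a j > 0), a j)
    (hk : a k < 0) (hlt : a k < b - Lmax)
    (a' : Fin n → ℝ) (ha' : ∀ j, a' j = if j = k then b - Lmax else a j) :
    ∀ x : Fin n → ℝ, (∀ j, x j = 0 ∨ x j = 1) →
      ((∑ j, a j * x j ≤ b) ↔ (∑ j, a' j * x j ≤ b)) := by
  intro x hx
  have hx0 : ∀ j, 0 ≤ x j := fun j => by rcases hx j with h|h <;> simp [h]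
  have hx1 : ∀ j, x j ≤ 1 := fun j => by rcases hx j with h|h <;> simp [h]
  have hkey : ∑ j, a' j * x j = ∑ j, a j * x j + (b - Lmax - a k) * x k := by
    have h1 : ∀ j ∈ Finset.univ, a' j * x j
        = a j * x j + (if j = k then (b - Lmax - a k) * x k else 0) := by
      intro j _
      rw [ha' j]
      by_cases h : j = k
      · subst h; simp; ring
      · simp [h]
    rw [Finset.sum_congr rfl h1, Finset.sum_add_distrib, Finset.sum_ite_eq']
    simp
  rcases hx k with hk0 | hk1
  · rw [hkey, hk0]; simp
  · have hbound : ∑ j, a j * x j - a k ≤ Lmax := by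
      have h1 : ∑ j, a j * x j - a k
          = ∑ j, (a j * x j - if j = k then a k else 0) := by
        rw [Finset.sum_sub_distrib, Finset.sum_ite_eq']
        simp
      rw [h1, hL, Finset.sum_filter]
      apply Finset.sum_le_sum
      intro j _
      by_cases hj : j = k
      · subst hj
        have : ¬ (a j > 0) := not_lt.mpr hk.le
        simp [hk1, this]
      · simp only [hj, if_false, sub_zero]
        by_cases hp : a j > 0
        · simp only [hp, if_true]; nlinarith [hx1 j, hx0 j]
        · simp only [hp, if_false]; nlinarith [hx0 j, not_lt.mp hp]
    constructor
    · intro h; rw [hkey, hk1]; linarith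
    · intro h; rw [hkey, hk1] at h; linarith
end

section
/- Gomory cut validity: Let t : Fin n → ℝ and β : ℝ. Every x : Fin n → ℤ with x j ≥ 0 for all j and ∑_j t j · x j = β satisfies the Gomory cut ∑_j (t j - ⌊t j⌋) · x j ≥ β - ⌊β⌋ (equivalently, ∑_j ⌊t j⌋ · x j ≤ ⌊β⌋). -/
theorem gomory_cut_valid (n : ℕ) (t : Fin n → ℝ) (β : ℝ)
    (x : Fin n → ℤ) (hx : ∀ j, 0 ≤ x j)
    (heq : ∑ j, t j * (x j : ℝ) = β) :
    (∑ j, (t j - (⌊t j⌋ : ℝ)) * (x j : ℝ) ≥ β - (⌊β⌋ : ℝ)) ∧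
    (∑ j, (⌊t j⌋ : ℝ) * (x j : ℝ) ≤ (⌊β⌋ : ℝ)) := by
  have hS : ∑ j, (⌊t j⌋ : ℝ) * (x j : ℝ) = ((∑ j, ⌊t j⌋ * x j : ℤ) : ℝ) := by
    push_cast; ring
  have hle : ((∑ j, ⌊t j⌋ * x j : ℤ) : ℝ) ≤ β := by
    rw [← hS, ← heq]
    apply Finset.sum_le_sum
    intro j _
    have h1 : (⌊t j⌋ : ℝ) ≤ t j := Int.floor_le _
    have h2 : (0 : ℝ) ≤ (x j : ℝ) := by exact_mod_cast hx j
    nlinarith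
  have hfl : (∑ j, ⌊t j⌋ * x j : ℤ) ≤ ⌊β⌋ := Int.le_floor.mpr hle
  have h2 : ∑ j, (⌊t j⌋ : ℝ) * (x j : ℝ) ≤ (⌊β⌋ : ℝ) := by
    rw [hS]; exact_mod_cast hfl
  refine ⟨?_, h2⟩
  have : ∑ j, (t j - (⌊t j⌋ : ℝ)) * (x j : ℝ)
      = β - ∑ j, (⌊t j⌋ : ℝ) * (x j : ℝ) := by
    rw [← heq, ← Finset.sum_sub_distrib]
    congr 1; ext j; ring
  rw [this]; linarith
end

section
/- Gomory cut separation: Let t : Fin n → ℝ and β : ℝ with β ∉ ℤ, and let x* : Fin n → ℝ satisfy ∑_j t j · x* j = β, where for every j either x* j = 0 or t j ∈ ℤ (i.e., basic variables have integer tableau coefficients). Then x* violates the Gomory cut: ∑_j (t j - ⌊t j⌋) · x* j < β - ⌊β⌋. -/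
theorem gomory_cut_separates (n : ℕ) (t : Fin n → ℝ) (β : ℝ)
    (hβ : ¬ ∃ z : ℤ, β = (z : ℝ))
    (xs : Fin n → ℝ)
    (hbasic : ∀ j, xs j = 0 ∨ ∃ z : ℤ, t j = (z : ℝ))
    (heq : ∑ j, t j * xs j = β) :
    ∑ j, (t j - (⌊t j⌋ : ℝ)) * xs j < β - (⌊β⌋ : ℝ) := by
  have hzero : ∑ j, (t j - (⌊t j⌋ : ℝ)) * xs j = 0 := by
    apply Finset.sum_eq_zero
    intro j _
    rcases hbasic j with h | ⟨z, hz⟩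
    · simp [h]
    · simp [hz, Int.floor_intCast]
  rw [hzero]
  have hle : (⌊β⌋ : ℝ) ≤ β := Int.floor_le β
  have hne : (⌊β⌋ : ℝ) ≠ β := fun h => hβ ⟨⌊β⌋, h.symm⟩
  linarith [lt_of_le_of_ne hle hne]
end
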